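/- Let Ψ be an Orlicz function such that ∫_{Ψ(1)}^{∞} dx / Ψ(B·Ψ⁻¹(x)) < ∞ for some B > 1, and let φ : 𝕋 → ℂ be measurable with |φ| ≤ 1 and m({w : |φ(w)| = 1}) = 0. If for every A > 0 there is K_A > 0 such that m({w ∈ 𝕋 : 1−|φ(w)| < λ}) ≤ K_A / Ψ(A·Ψ⁻¹(1/λ)) for all λ ∈ (0,1], then ∫_𝕋 Ψ( C·Ψ⁻¹( 1/(1−|φ(w)|) ) ) dm(w) < ∞ for every C > 0. -/

import Mathlib

/-!
By the layer-cake formula it suffices to show that the distribution function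
`t ↦ m {Ψ (C Ψ⁻¹ (1 / (1 - |φ|))) > t}` is integrable at `∞`. As `Ψ` and `Ψ⁻¹` are increasing,
this set is `{1 - |φ| < λ}` with `λ = 1 / Ψ (Ψ⁻¹ t / C)`, so the hypothesis with `A = B C` bounds
its measure by `K / Ψ (B Ψ⁻¹ t)`, which is integrable by the choice of `B`.
-/

open MeasureTheory

/-- The normalized Lebesgue (Haar) measure on the unit circle `𝕋 ⊆ ℂ`,
realized as a measure on `ℂ` carried by the circle. -/
noncomputable def circleMeasure : Measure ℂ :=
  (ENNReal.ofReal (2 * Real.pi))⁻¹ •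
    (Measure.map (fun t : ℝ => Complex.exp (t * Complex.I))
      (volume.restrict (Set.Ioc 0 (2 * Real.pi))))

open Set ENNReal

instance isProbabilityMeasure_circleMeasure : IsProbabilityMeasure circleMeasure := by
  constructor
  rw [circleMeasure, Measure.smul_apply,
    Measure.map_apply (by fun_prop) MeasurableSet.univ]
  simp only [preimage_univ, Measure.restrict_apply_univ, Real.volume_Ioc, sub_zero, smul_eq_mul]
  exact ENNReal.inv_mul_cancel (by simp [Real.pi_pos]) ofReal_ne_top

lemma ae_norm_eq_one_circleMeasure : ∀ᵐ w ∂circleMeasure, ‖w‖ = 1 := by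
  have hmeas : MeasurableSet {w : ℂ | ¬‖w‖ = 1} :=
    (measurableSet_singleton (1 : ℝ)).preimage continuous_norm.measurable |>.compl
  rw [ae_iff, circleMeasure, Measure.smul_apply, Measure.map_apply (by fun_prop) hmeas]
  simp [Complex.norm_exp_ofReal_mul_I]

lemma lintegral_ofReal_lt_top_of_setLIntegral_meas_lt {α : Type*} [MeasurableSpace α]
    {μ : Measure α} [IsFiniteMeasure μ] {f : α → ℝ} (f_nn : 0 ≤ᵐ[μ] f)
    (f_mble : AEMeasurable f μ) (t₀ : ℝ) (h : ∫⁻ t in Ioi t₀, μ {a | t < f a} < ∞) :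
    ∫⁻ a, ENNReal.ofReal (f a) ∂μ < ∞ := by
  have h_near_zero : ∫⁻ t in Ioc 0 t₀, μ {a | t < f a} < ∞ :=
    calc ∫⁻ t in Ioc 0 t₀, μ {a | t < f a}
        ≤ ∫⁻ _ in Ioc 0 t₀, μ univ := lintegral_mono fun _ => measure_mono (subset_univ _)
      _ < ∞ := by
        rw [setLIntegral_const, Real.volume_Ioc]
        exact mul_lt_top (measure_lt_top μ univ) ofReal_lt_top
  rw [lintegral_eq_lintegral_meas_lt μ f_nn f_mble]
  calc ∫⁻ t in Ioi 0, μ {a | t < f a}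
      ≤ ∫⁻ t in Ioc 0 t₀ ∪ Ioi t₀, μ {a | t < f a} :=
        lintegral_mono_set fun t ht => (le_or_gt t t₀).imp (fun h => ⟨ht, h⟩) id
    _ ≤ _ := lintegral_union_le _ _ _
    _ < ∞ := add_lt_top.mpr ⟨h_near_zero, h⟩

lemma setLIntegral_ofReal_div_lt_top {g : ℝ → ℝ} {s t₀ K : ℝ} (hs : s ≤ t₀) (hK : 0 ≤ K)
    (h : ∫⁻ t in Ioi s, ENNReal.ofReal (1 / g t) < ∞) :
    ∫⁻ t in Ioi t₀, ENNReal.ofReal (K / g t) < ∞ :=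
  calc ∫⁻ t in Ioi t₀, ENNReal.ofReal (K / g t)
      = ENNReal.ofReal K * ∫⁻ t in Ioi t₀, ENNReal.ofReal (1 / g t) := by
        simp_rw [← lintegral_const_mul' _ _ ofReal_ne_top, ← ofReal_mul hK, mul_one_div]
    _ ≤ ENNReal.ofReal K * ∫⁻ t in Ioi s, ENNReal.ofReal (1 / g t) := by gcongr
    _ < ∞ := mul_lt_top ofReal_lt_top h

lemma MonotoneOn.aemeasurable_comp {α : Type*} [MeasurableSpace α] {μ : Measure α}
    {F : ℝ → ℝ} {a : ℝ} (hF : MonotoneOn F (Ici a)) {g : α → ℝ} (hg : AEMeasurable g μ)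
    (hg_ge : ∀ᵐ x ∂μ, a ≤ g x) : AEMeasurable (F ∘ g) μ := by
  have hF_max : Monotone fun s => F (max s a) := fun s t hst =>
    hF (le_max_right s a) (le_max_right t a) (max_le_max_right a hst)
  refine (hF_max.measurable.comp_aemeasurable hg).congr ?_
  filter_upwards [hg_ge] with x hx
  simp only [Function.comp_apply, max_eq_left hx]

section OrliczInverse

variable {Ψ Ψinv : ℝ → ℝ}

lemma lt_apply_mul_inv_iff (hΨ : StrictMonoOn Ψ (Ici 0))
    (hΨinv : ∀ y, 0 ≤ y → Ψ (Ψinv y) = y) (hΨinv_nn : ∀ y, 0 ≤ y → 0 ≤ Ψinv y)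
    {C t u : ℝ} (hC : 0 < C) (ht : 0 ≤ t) (hu : 0 ≤ u) :
    t < Ψ (C * Ψinv u) ↔ Ψ (Ψinv t / C) < u := by
  have hinv_t : 0 ≤ Ψinv t / C := div_nonneg (hΨinv_nn t ht) hC.le
  have hinv_u : 0 ≤ C * Ψinv u := mul_nonneg hC.le (hΨinv_nn u hu)
  conv_lhs => rw [← hΨinv t ht]
  conv_rhs => rw [← hΨinv u hu]
  rw [hΨ.lt_iff_lt (hΨinv_nn t ht) hinv_u, hΨ.lt_iff_lt hinv_t (hΨinv_nn u hu), div_lt_iff₀' hC]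

lemma monotoneOn_apply_mul_inv (hΨ : StrictMonoOn Ψ (Ici 0))
    (hΨinv : ∀ y, 0 ≤ y → Ψ (Ψinv y) = y) (hΨinv_nn : ∀ y, 0 ≤ y → 0 ≤ Ψinv y)
    {C : ℝ} (hC : 0 < C) : MonotoneOn (fun u => Ψ (C * Ψinv u)) (Ici 0) := by
  intro u (hu : 0 ≤ u) v (hv : 0 ≤ v) huv
  have hinv : Ψinv u ≤ Ψinv v := by
    rwa [← hΨ.le_iff_le (hΨinv_nn u hu) (hΨinv_nn v hv), hΨinv u hu, hΨinv v hv]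
  exact hΨ.monotoneOn (mul_nonneg hC.le (hΨinv_nn u hu)) (mul_nonneg hC.le (hΨinv_nn v hv))
    (mul_le_mul_of_nonneg_left hinv hC.le)

lemma meas_lt_apply_mul_inv_one_div_le (hΨ : StrictMonoOn Ψ (Ici 0))
    (hΨinv_apply : ∀ x, 0 ≤ x → Ψinv (Ψ x) = x) (hΨinv : ∀ y, 0 ≤ y → Ψ (Ψinv y) = y)
    (hΨinv_nn : ∀ y, 0 ≤ y → 0 ≤ Ψinv y) {α : Type*} [MeasurableSpace α] {μ : Measure α}
    {u : α → ℝ} (hu : ∀ᵐ a ∂μ, 0 < u a) {B C K : ℝ} (hC : 0 < C)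
    (hK : ∀ lam : ℝ, 0 < lam → lam ≤ 1 →
      μ {a | u a < lam} ≤ ENNReal.ofReal (K / Ψ (B * C * Ψinv (1 / lam))))
    {t : ℝ} (ht : 0 ≤ t) (ht₁ : Ψ (C * Ψinv 1) ≤ t) :
    μ {a | t < Ψ (C * Ψinv (1 / u a))} ≤ ENNReal.ofReal (K / Ψ (B * Ψinv t)) := by
  set r := Ψ (Ψinv t / C)
  have hr : 1 ≤ r :=
    not_lt.mp ((lt_apply_mul_inv_iff hΨ hΨinv hΨinv_nn hC ht zero_le_one).not.mp ht₁.not_gt)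
  have hr₀ : 0 < r := zero_lt_one.trans_le hr
  have h_sub : {a | t < Ψ (C * Ψinv (1 / u a))} ≤ᵐ[μ] {a | u a < 1 / r} := by
    filter_upwards [hu] with a ha (h_lt : t < _)
    rwa [lt_apply_mul_inv_iff hΨ hΨinv hΨinv_nn hC ht (one_div_pos.mpr ha).le,
      lt_one_div hr₀ ha] at h_lt
  calc μ {a | t < Ψ (C * Ψinv (1 / u a))}
      ≤ μ {a | u a < 1 / r} := measure_mono_ae h_sub
    _ ≤ ENNReal.ofReal (K / Ψ (B * C * Ψinv (1 / (1 / r)))) :=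
        hK _ (one_div_pos.mpr hr₀) ((div_le_one hr₀).mpr hr)
    _ = ENNReal.ofReal (K / Ψ (B * Ψinv t)) := by
        rw [one_div_one_div, hΨinv_apply _ (div_nonneg (hΨinv_nn t ht) hC.le),
          mul_assoc, mul_div_cancel₀ _ hC.ne']

end OrliczInverse

lemma ae_one_sub_norm_pos_of_circleMeasure {φ : ℂ → ℂ} (hφbd : ∀ w : ℂ, ‖w‖ = 1 → ‖φ w‖ ≤ 1)
    (hφ1 : circleMeasure {w : ℂ | ‖φ w‖ = 1} = 0) : ∀ᵐ w ∂circleMeasure, 0 < 1 - ‖φ w‖ := by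
  have hφ_ne : ∀ᵐ w ∂circleMeasure, ‖φ w‖ ≠ 1 := by
    rw [ae_iff]; simpa only [ne_eq, not_not] using hφ1
  filter_upwards [ae_norm_eq_one_circleMeasure, hφ_ne] with w hw hφw
  exact sub_pos.mpr ((hφbd w hw).lt_of_ne hφw)

theorem stmt_10_general
    (Ψ Ψinv : ℝ → ℝ)
    (hΨ0 : Ψ 0 = 0)
    (hΨmono : StrictMonoOn Ψ (Set.Ici 0))
    (hΨinv1 : ∀ x, 0 ≤ x → Ψinv (Ψ x) = x)
    (hΨinv2 : ∀ y, 0 ≤ y → Ψ (Ψinv y) = y)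
    (hΨinv0 : ∀ y, 0 ≤ y → 0 ≤ Ψinv y)
    (hint : ∃ B > (1 : ℝ),
      (∫⁻ x in Set.Ioi (Ψ 1), ENNReal.ofReal (1 / Ψ (B * Ψinv x))) < ⊤)
    (φ : ℂ → ℂ) (hφmeas : Measurable φ)
    (hφbd : ∀ w : ℂ, ‖w‖ = 1 → ‖φ w‖ ≤ 1)
    (hφ1 : circleMeasure {w : ℂ | ‖φ w‖ = 1} = 0)
    (hOB : ∀ A > (0 : ℝ), ∃ K > (0 : ℝ), ∀ lam : ℝ, 0 < lam → lam ≤ 1 →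
      circleMeasure {w : ℂ | 1 - ‖φ w‖ < lam}
        ≤ ENNReal.ofReal (K / Ψ (A * Ψinv (1 / lam)))) :
    ∀ C > (0 : ℝ),
      (∫⁻ w, ENNReal.ofReal (Ψ (C * Ψinv (1 / (1 - ‖φ w‖))))
        ∂circleMeasure) < ⊤ := by
  intro C hC
  obtain ⟨B, hB, hB_int⟩ := hint
  obtain ⟨K, hK, hK_bd⟩ := hOB (B * C) (mul_pos (one_pos.trans hB) hC)
  have hΨ_nn : ∀ x, 0 ≤ x → 0 ≤ Ψ x := fun x hx =>
    hΨ0 ▸ hΨmono.monotoneOn (le_refl (0 : ℝ)) hx hx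
  have hφ_lt := ae_one_sub_norm_pos_of_circleMeasure hφbd hφ1
  have hφ_inv_nn : ∀ᵐ w ∂circleMeasure, 0 ≤ 1 / (1 - ‖φ w‖) :=
    hφ_lt.mono fun _ h => (one_div_pos.mpr h).le
  have f_mble := (monotoneOn_apply_mul_inv hΨmono hΨinv2 hΨinv0 hC).aemeasurable_comp
    (by fun_prop : Measurable fun w => 1 / (1 - ‖φ w‖)).aemeasurable hφ_inv_nn
  have f_nn : ∀ᵐ w ∂circleMeasure, 0 ≤ Ψ (C * Ψinv (1 / (1 - ‖φ w‖))) :=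
    hφ_inv_nn.mono fun w h => hΨ_nn _ (mul_nonneg hC.le (hΨinv0 _ h))
  set t₀ := max (Ψ 1) (Ψ (C * Ψinv 1))
  refine lintegral_ofReal_lt_top_of_setLIntegral_meas_lt f_nn f_mble t₀ ?_
  calc ∫⁻ t in Ioi t₀, circleMeasure {w | t < Ψ (C * Ψinv (1 / (1 - ‖φ w‖)))}
      ≤ ∫⁻ t in Ioi t₀, ENNReal.ofReal (K / Ψ (B * Ψinv t)) :=
        setLIntegral_mono_ae' measurableSet_Ioi <| ae_of_all _ fun t (ht : t₀ < t) =>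
          meas_lt_apply_mul_inv_one_div_le hΨmono hΨinv1 hΨinv2 hΨinv0 hφ_lt hC hK_bd
            ((hΨ_nn 1 zero_le_one).trans (le_max_left _ _) |>.trans ht.le)
            ((le_max_right _ _).trans ht.le)
    _ < ∞ := setLIntegral_ofReal_div_lt_top (le_max_left _ _) hK.le hB_int

theorem stmt_10
    (Ψ Ψinv : ℝ → ℝ)
    (hΨ0 : Ψ 0 = 0)
    (hΨmono : StrictMonoOn Ψ (Set.Ici 0))
    (hΨconv : StrictConvexOn ℝ (Set.Ici 0) Ψ)
    (hΨcont : ContinuousOn Ψ (Set.Ici 0))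
    (hΨlim : Filter.Tendsto (fun x => Ψ x / x) Filter.atTop Filter.atTop)
    (hΨinv1 : ∀ x, 0 ≤ x → Ψinv (Ψ x) = x)
    (hΨinv2 : ∀ y, 0 ≤ y → Ψ (Ψinv y) = y)
    (hΨinv0 : ∀ y, 0 ≤ y → 0 ≤ Ψinv y)
    (hint : ∃ B > (1 : ℝ),
      (∫⁻ x in Set.Ioi (Ψ 1), ENNReal.ofReal (1 / Ψ (B * Ψinv x))) < ⊤)
    (φ : ℂ → ℂ) (hφmeas : Measurable φ)
    (hφbd : ∀ w : ℂ, ‖w‖ = 1 → ‖φ w‖ ≤ 1)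
    (hφ1 : circleMeasure {w : ℂ | ‖φ w‖ = 1} = 0)
    (hOB : ∀ A > (0 : ℝ), ∃ K > (0 : ℝ), ∀ lam : ℝ, 0 < lam → lam ≤ 1 →
      circleMeasure {w : ℂ | 1 - ‖φ w‖ < lam}
        ≤ ENNReal.ofReal (K / Ψ (A * Ψinv (1 / lam)))) :
    ∀ C > (0 : ℝ),
      (∫⁻ w, ENNReal.ofReal (Ψ (C * Ψinv (1 / (1 - ‖φ w‖))))
        ∂circleMeasure) < ⊤ :=
  stmt_10_general Ψ Ψinv hΨ0 hΨmono hΨinv1 hΨinv2 hΨinv0 hint φ hφmeas hφbd hφ1 hOB
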